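/- Let f ∈ ℂ[x_1,…,x_n] be a polynomial of degree d (not necessarily homogeneous). Suppose there exist an integer M ≥ 1 and homogeneous linear forms a_1, …, a_m and b_1, …, b_m in x_1,…,x_n with coefficients in ℂ[[ε]] such that ε^{−M} (∏_{i=1}^m (1 + ε a_i) − ∏_{i=1}^m (1 + ε b_i)) has all coefficients in ℂ[[ε]] and is ≡ f (mod ε). Then f belongs to the border class Σ^[2md]Λ^[d]Σ; in fact each homogeneous component of f of degree j with 1 ≤ j ≤ d has border Waring rank at most 2m, and the degree-0 component of f is 0. -/

import Mathlib

open MvPolynomial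

noncomputable section

/-- All Laurent-series coefficients of `F` lie in `ℂ[[ε]]`, i.e. they have
no terms of negative order. -/
def HasRegularCoeffs {σ : Type*} (F : MvPolynomial σ (LaurentSeries ℂ)) : Prop :=
  ∀ (m : σ →₀ ℕ) (k : ℤ), k < 0 → (F.coeff m).coeff k = 0

/-- `F` has all coefficients in `ℂ[[ε]]` and `F ≡ f (mod ε)`, i.e. substituting
`ε = 0` into the coefficients of `F` yields `f`. -/
def ApproxTo {σ : Type*} (F : MvPolynomial σ (LaurentSeries ℂ)) (f : MvPolynomial σ ℂ) : Prop :=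
  HasRegularCoeffs F ∧ ∀ m : σ →₀ ℕ, (F.coeff m).coeff 0 = f.coeff m

/-- The Waring rank of `f` as a form of degree `d`: the least `r` such that `f` is a
sum of `r` `d`-th powers of homogeneous linear forms over `ℂ`. -/
def waringRank {n : ℕ} (f : MvPolynomial (Fin n) ℂ) (d : ℕ) : ℕ :=
  sInf {r | ∃ ℓ : Fin r → MvPolynomial (Fin n) ℂ,
    (∀ i, (ℓ i).IsHomogeneous 1) ∧ f = ∑ i, ℓ i ^ d}

/-- The border Waring rank of `f` as a form of degree `d`: the least `r` such that there
are homogeneous linear forms `ℓ₁, …, ℓ_r` with coefficients in `ℂ((ε))` whose sum of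
`d`-th powers has all coefficients in `ℂ[[ε]]` and is `≡ f (mod ε)`. -/
def borderWaringRank {n : ℕ} (f : MvPolynomial (Fin n) ℂ) (d : ℕ) : ℕ :=
  sInf {r | ∃ ℓ : Fin r → MvPolynomial (Fin n) (LaurentSeries ℂ),
    (∀ i, (ℓ i).IsHomogeneous 1) ∧ ApproxTo (∑ i, ℓ i ^ d) f}

/-- Membership in the border class `Σ^[s]Λ^[e]Σ`: `g` is approximated by a sum of `s`
powers, with exponents at most `e`, of affine linear forms over `ℂ((ε))`. -/
def MemBorderSLS {N : ℕ} (g : MvPolynomial (Fin N) ℂ) (s e : ℕ) : Prop :=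
  ∃ (L : Fin s → MvPolynomial (Fin N) (LaurentSeries ℂ)) (E : Fin s → ℕ),
    (∀ i, (L i).totalDegree ≤ 1) ∧ (∀ i, E i ≤ e) ∧ ApproxTo (∑ i, L i ^ E i) g


/-!
Since the `aᵢ` are linear forms, the degree-`k` part of `∏ (1 + ε aᵢ)` is the elementary
symmetric function `e_k(ε a)`, so the hypothesis says `ε^{-M} (e_k(ε a) - e_k(ε b)) ≡ f_k` for
every `k`; in particular `f_0 = 0`. Newton's identities then give, by induction on `j`,
`ε^{-M} (p_j(ε a) - p_j(ε b)) ≡ (-1)^{j+1} j f_j` for the power sums `p_j`: each correction term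
is such a difference times a symmetric function of the `ε aᵢ` or `ε bᵢ` of positive degree,
which vanishes mod `ε`. After the substitution `ε ↦ ε^j` the prefactor `ε^{-Mj}` is a `j`-th power,
and absorbing it together with a `j`-th root of `±((-1)^{j+1} j)⁻¹` into the linear forms writes
`f_j` as a border sum of `2m` `j`-th powers. Summing over `1 ≤ j ≤ d` gives `Σ^[2md]Λ^[d]Σ`.
-/

open scoped LaurentSeries PowerSeries

theorem LaurentSeries.mem_range_ofPowerSeries_iff {R : Type*} [Ring R] (s : R⸨X⸩) :
    s ∈ (HahnSeries.ofPowerSeries ℤ R).range ↔ ∀ k < 0, s.coeff k = 0 := by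
  constructor
  · rintro ⟨p, rfl⟩ k hk
    rw [PowerSeries.coeff_coe, if_pos hk]
  · refine fun hs => ⟨PowerSeries.mk fun n => s.coeff n, HahnSeries.ext <| funext fun k => ?_⟩
    rw [PowerSeries.coeff_coe]
    split_ifs with hk
    · exact (hs k hk).symm
    · rw [PowerSeries.coeff_mk, Int.natAbs_of_nonneg (not_lt.1 hk)]

section Approx

variable {σ : Type*}

theorem hasRegularCoeffs_iff {F : MvPolynomial σ ℂ⸨X⸩} :
    HasRegularCoeffs F ↔ F ∈ (map (σ := σ) (HahnSeries.ofPowerSeries ℤ ℂ)).range := by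
  constructor
  · intro hF
    refine mem_range_map_iff_coeffs_subset.2 fun c hc => ?_
    obtain ⟨m, -, rfl⟩ := mem_coeffs_iff.1 hc
    exact (LaurentSeries.mem_range_ofPowerSeries_iff _).2 (hF m)
  · rintro ⟨G, rfl⟩ m
    rw [coeff_map]
    exact (LaurentSeries.mem_range_ofPowerSeries_iff _).1 ⟨_, rfl⟩

/-- The graph of reduction mod `ε` on polynomials with coefficients in `ℂ[[ε]]`. -/
def approxSubring (σ : Type*) : Subring (MvPolynomial σ ℂ⸨X⸩ × MvPolynomial σ ℂ) :=
  ((map (HahnSeries.ofPowerSeries ℤ ℂ)).prod (map PowerSeries.constantCoeff)).range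

theorem approxTo_iff_mem {F : MvPolynomial σ ℂ⸨X⸩} {f : MvPolynomial σ ℂ} :
    ApproxTo F f ↔ (F, f) ∈ approxSubring σ := by
  constructor
  · rintro ⟨hF, hf⟩
    obtain ⟨G, rfl⟩ := hasRegularCoeffs_iff.1 hF
    refine ⟨G, Prod.ext rfl (MvPolynomial.ext _ _ fun m => ?_)⟩
    rw [← hf m, RingHom.prod_apply, coeff_map, coeff_map,
      ← PowerSeries.coeff_zero_eq_constantCoeff_apply,
      ← HahnSeries.ofPowerSeries_apply_coeff (Γ := ℤ), Nat.cast_zero]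
  · rintro ⟨G, hG⟩
    obtain ⟨rfl, rfl⟩ := Prod.mk.inj hG
    exact ⟨hasRegularCoeffs_iff.2 ⟨G, rfl⟩, fun m => by
      rw [coeff_map, coeff_map, ← PowerSeries.coeff_zero_eq_constantCoeff_apply,
        ← HahnSeries.ofPowerSeries_apply_coeff (Γ := ℤ), Nat.cast_zero]⟩

theorem HasRegularCoeffs.exists_approxTo {F : MvPolynomial σ ℂ⸨X⸩} (hF : HasRegularCoeffs F) :
    ∃ f, ApproxTo F f := by
  obtain ⟨G, rfl⟩ := hasRegularCoeffs_iff.1 hF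
  exact ⟨_, approxTo_iff_mem.2 ⟨G, rfl⟩⟩

namespace ApproxTo

variable {F G : MvPolynomial σ ℂ⸨X⸩} {f g : MvPolynomial σ ℂ}

theorem unique (hf : ApproxTo F f) (hg : ApproxTo F g) : f = g :=
  MvPolynomial.ext _ _ fun m => (hf.2 m).symm.trans (hg.2 m)

theorem add (hF : ApproxTo F f) (hG : ApproxTo G g) : ApproxTo (F + G) (f + g) := by
  rw [approxTo_iff_mem, ← Prod.mk_add_mk]
  exact add_mem (approxTo_iff_mem.1 hF) (approxTo_iff_mem.1 hG)

theorem sub (hF : ApproxTo F f) (hG : ApproxTo G g) : ApproxTo (F - G) (f - g) := by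
  rw [approxTo_iff_mem, ← Prod.mk_sub_mk]
  exact sub_mem (approxTo_iff_mem.1 hF) (approxTo_iff_mem.1 hG)

theorem neg (hF : ApproxTo F f) : ApproxTo (-F) (-f) := by
  rw [approxTo_iff_mem, ← Prod.neg_mk]
  exact neg_mem (approxTo_iff_mem.1 hF)

theorem mul (hF : ApproxTo F f) (hG : ApproxTo G g) : ApproxTo (F * G) (f * g) := by
  rw [approxTo_iff_mem, ← Prod.mk_mul_mk]
  exact mul_mem (approxTo_iff_mem.1 hF) (approxTo_iff_mem.1 hG)

theorem pow (hF : ApproxTo F f) (k : ℕ) : ApproxTo (F ^ k) (f ^ k) := by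
  rw [approxTo_iff_mem, ← Prod.pow_mk]
  exact pow_mem (approxTo_iff_mem.1 hF) k

theorem sum {ι : Type*} {s : Finset ι} {F : ι → MvPolynomial σ ℂ⸨X⸩} {f : ι → MvPolynomial σ ℂ}
    (h : ∀ i ∈ s, ApproxTo (F i) (f i)) : ApproxTo (∑ i ∈ s, F i) (∑ i ∈ s, f i) := by
  rw [approxTo_iff_mem, prod_mk_sum]
  exact sum_mem fun i hi => approxTo_iff_mem.1 (h i hi)

theorem prod {ι : Type*} {s : Finset ι} {F : ι → MvPolynomial σ ℂ⸨X⸩} {f : ι → MvPolynomial σ ℂ}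
    (h : ∀ i ∈ s, ApproxTo (F i) (f i)) : ApproxTo (∏ i ∈ s, F i) (∏ i ∈ s, f i) := by
  rw [approxTo_iff_mem, prod_mk_prod]
  exact prod_mem fun i hi => approxTo_iff_mem.1 (h i hi)

theorem sum_zero {ι : Type*} {s : Finset ι} {F : ι → MvPolynomial σ ℂ⸨X⸩}
    (h : ∀ i ∈ s, ApproxTo (F i) 0) : ApproxTo (∑ i ∈ s, F i) 0 := by
  simpa using ApproxTo.sum h

end ApproxTo

theorem approxTo_zero : ApproxTo (0 : MvPolynomial σ ℂ⸨X⸩) 0 :=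
  approxTo_iff_mem.2 (zero_mem _)

theorem approxTo_one : ApproxTo (1 : MvPolynomial σ ℂ⸨X⸩) 1 :=
  approxTo_iff_mem.2 (one_mem _)

theorem approxTo_natCast (k : ℕ) : ApproxTo (k : MvPolynomial σ ℂ⸨X⸩) k :=
  approxTo_iff_mem.2 (natCast_mem _ k)

theorem approxTo_C_C (z : ℂ) : ApproxTo (C (HahnSeries.C z) : MvPolynomial σ ℂ⸨X⸩) (C z) :=
  approxTo_iff_mem.2 ⟨C (PowerSeries.C z), by simp⟩

theorem approxTo_C_single_one : ApproxTo (C (HahnSeries.single 1 1) : MvPolynomial σ ℂ⸨X⸩) 0 :=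
  approxTo_iff_mem.2 ⟨C PowerSeries.X, by simp⟩

theorem ApproxTo.homogeneousComponent {F : MvPolynomial σ ℂ⸨X⸩} {f : MvPolynomial σ ℂ}
    (hF : ApproxTo F f) (k : ℕ) :
    ApproxTo (homogeneousComponent k F) (homogeneousComponent k f) := by
  refine ⟨fun m l hl => ?_, fun m => ?_⟩
  · rw [coeff_homogeneousComponent]
    split
    · exact hF.1 m l hl
    · exact HahnSeries.coeff_zero
  · rw [coeff_homogeneousComponent, coeff_homogeneousComponent]
    split
    · exact hF.2 m
    · exact HahnSeries.coeff_zero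

end Approx

/-- The substitution `ε ↦ ε ^ j` of Laurent series. -/
def LaurentSeries.expand (R : Type*) [Semiring R] {j : ℕ} (hj : 0 < j) : R⸨X⸩ →+* R⸨X⸩ :=
  HahnSeries.embDomainRingHom (AddMonoidHom.mulLeft (j : ℤ)) (fun _ _ h => mul_right_injective₀
    (by positivity) h) fun _ _ => mul_le_mul_iff_right₀ (by positivity)

namespace LaurentSeries

open HahnSeries

variable {R : Type*} [Semiring R] {j : ℕ} (hj : 0 < j)

theorem expand_single (k : ℤ) (r : R) : expand R hj (single k r) = single (j * k) r :=
  embDomain_single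

theorem coeff_expand_mul (s : R⸨X⸩) (k : ℤ) : (expand R hj s).coeff (j * k) = s.coeff k :=
  embDomain_coeff

theorem coeff_expand_of_not_dvd (s : R⸨X⸩) {k : ℤ} (hk : ¬ (j : ℤ) ∣ k) :
    (expand R hj s).coeff k = 0 :=
  embDomain_of_notMem_range fun ⟨l, hl⟩ => hk ⟨l, hl.symm⟩

end LaurentSeries

theorem ApproxTo.map_expand {σ : Type*} {F : MvPolynomial σ ℂ⸨X⸩} {f : MvPolynomial σ ℂ}
    (hF : ApproxTo F f) {j : ℕ} (hj : 0 < j) :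
    ApproxTo (map (LaurentSeries.expand ℂ hj) F) f := by
  refine ⟨fun m k hk => ?_, fun m => ?_⟩ <;> rw [coeff_map]
  · by_cases hdvd : (j : ℤ) ∣ k
    · obtain ⟨l, rfl⟩ := hdvd
      rw [LaurentSeries.coeff_expand_mul]
      exact hF.1 m l (neg_of_mul_neg_right hk (by positivity))
    · exact LaurentSeries.coeff_expand_of_not_dvd hj _ hdvd
  · simpa [hF.2 m] using LaurentSeries.coeff_expand_mul hj (F.coeff m) 0

section Symmetric

open Finset

variable {ι : Type*} [Fintype ι]

def esymmOf {S : Type*} [CommSemiring S] (c : ι → S) (k : ℕ) : S :=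
  ∑ t ∈ powersetCard k univ, ∏ i ∈ t, c i

theorem esymmOf_zero {S : Type*} [CommSemiring S] (c : ι → S) : esymmOf c 0 = 1 := by
  simp [esymmOf]

theorem sum_pow_eq_mul_esymmOf_sub_sum {S : Type*} [CommRing S] (c : ι → S) {j : ℕ}
    (hj : 0 < j) :
    ∑ i, c i ^ j = (-1) ^ (j + 1) * j * esymmOf c j -
      ∑ p ∈ antidiagonal j with p.1 ∈ Set.Ioo 0 j, (-1) ^ p.1 * esymmOf c p.1 * ∑ i, c i ^ p.2 := by
  simpa [MvPolynomial.psum, MvPolynomial.esymm, esymmOf] using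
    congrArg (aeval c) (MvPolynomial.psum_eq_mul_esymm_sub_sum ι ℤ j hj)

theorem homogeneousComponent_prod_one_add {σ R : Type*} [CommSemiring R]
    {c : ι → MvPolynomial σ R} (hc : ∀ i, (c i).IsHomogeneous 1) (k : ℕ) :
    homogeneousComponent k (∏ i, (1 + c i)) = esymmOf c k := by
  rw [prod_one_add, map_sum, esymmOf, powersetCard_eq_filter, sum_filter]
  refine sum_congr rfl fun t _ => ?_
  have ht : (∏ i ∈ t, c i).IsHomogeneous #t := by
    simpa using IsHomogeneous.prod t c (fun _ => 1) fun i _ => hc i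
  rw [homogeneousComponent_of_mem ht]
  exact if_congr eq_comm rfl rfl

/-- Newton's identity, arranged so that every correction term has a difference of `T`-scaled
invariants of `x` and `y` as a factor. -/
theorem mul_sum_pow_sub_eq {S : Type*} [CommRing S] (T : S) (x y : ι → S) {j : ℕ} (hj : 0 < j) :
    T * (∑ i, x i ^ j - ∑ i, y i ^ j) =
      (-1) ^ (j + 1) * j * (T * (esymmOf x j - esymmOf y j)) -
      ∑ p ∈ antidiagonal j with p.1 ∈ Set.Ioo 0 j, (-1) ^ p.1 *
        (T * (esymmOf x p.1 - esymmOf y p.1) * ∑ i, x i ^ p.2 +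
          esymmOf y p.1 * (T * (∑ i, x i ^ p.2 - ∑ i, y i ^ p.2))) := by
  have hsum : ∑ p ∈ antidiagonal j with p.1 ∈ Set.Ioo 0 j, (-1) ^ p.1 *
        (T * (esymmOf x p.1 - esymmOf y p.1) * ∑ i, x i ^ p.2 +
          esymmOf y p.1 * (T * (∑ i, x i ^ p.2 - ∑ i, y i ^ p.2))) =
      T * ∑ p ∈ antidiagonal j with p.1 ∈ Set.Ioo 0 j,
          (-1) ^ p.1 * esymmOf x p.1 * ∑ i, x i ^ p.2 -
        T * ∑ p ∈ antidiagonal j with p.1 ∈ Set.Ioo 0 j,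
          (-1) ^ p.1 * esymmOf y p.1 * ∑ i, y i ^ p.2 := by
    rw [mul_sum, mul_sum, ← sum_sub_distrib]
    exact sum_congr rfl fun _ _ => by ring
  rw [hsum, sum_pow_eq_mul_esymmOf_sub_sum x hj, sum_pow_eq_mul_esymmOf_sub_sum y hj]
  ring

end Symmetric

theorem approxTo_mul_sum_pow_sub {σ ι : Type*} [Fintype ι] (T : MvPolynomial σ ℂ⸨X⸩)
    {x y : ι → MvPolynomial σ ℂ⸨X⸩} {g : ℕ → MvPolynomial σ ℂ} (hx : ∀ i, ApproxTo (x i) 0)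
    (hy : ∀ i, ApproxTo (y i) 0) (hg : ∀ k, ApproxTo (T * (esymmOf x k - esymmOf y k)) (g k))
    {j : ℕ} (hj : 0 < j) :
    ApproxTo (T * (∑ i, x i ^ j - ∑ i, y i ^ j)) ((-1) ^ (j + 1) * j * g j) := by
  have hpow (l : ℕ) (hl : 0 < l) : ApproxTo (∑ i, x i ^ l) 0 :=
    ApproxTo.sum_zero fun i _ => by simpa [zero_pow hl.ne'] using (hx i).pow l
  have hesymm (k : ℕ) (hk : 0 < k) : ApproxTo (esymmOf y k) 0 := by
    refine ApproxTo.sum_zero fun t ht => ?_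
    have hne : t.Nonempty := Finset.card_pos.1 ((Finset.mem_powersetCard.1 ht).2 ▸ hk)
    simpa [Finset.prod_const, zero_pow hne.card_pos.ne'] using
      ApproxTo.prod fun i (_ : i ∈ t) => hy i
  have hsign (l : ℕ) : ApproxTo ((-1) ^ l : MvPolynomial σ ℂ⸨X⸩) ((-1) ^ l) :=
    approxTo_one.neg.pow l
  induction j using Nat.strong_induction_on with
  | _ j IH =>
  rw [mul_sum_pow_sub_eq T x y hj, ← sub_zero ((-1) ^ (j + 1) * (j : MvPolynomial σ ℂ) * g j)]
  refine (((hsign (j + 1)).mul (approxTo_natCast j)).mul (hg j)).sub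
    (ApproxTo.sum_zero fun p hp => ?_)
  obtain ⟨hpj, hp1, hp2⟩ : p.1 + p.2 = j ∧ 0 < p.1 ∧ p.1 < j := by simpa using hp
  simpa using (hsign p.1).mul (((hg p.1).mul (hpow p.2 (by omega))).add
    ((hesymm p.1 hp1).mul (IH p.2 (by omega) (by omega))))

theorem exists_sum_pow_approxTo {σ : Type*} {m j : ℕ} (hj : 0 < j) (k : ℤ)
    {x y : Fin m → MvPolynomial σ ℂ⸨X⸩} (hx : ∀ i, (x i).IsHomogeneous 1)
    (hy : ∀ i, (y i).IsHomogeneous 1) {c : ℂ} (hc : c ≠ 0) {g : MvPolynomial σ ℂ}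
    (h : ApproxTo (C (HahnSeries.single k 1) * (∑ i, x i ^ j - ∑ i, y i ^ j)) (C c * g)) :
    ∃ ℓ : Fin (m + m) → MvPolynomial σ ℂ⸨X⸩,
      (∀ i, (ℓ i).IsHomogeneous 1) ∧ ApproxTo (∑ i, ℓ i ^ j) g := by
  set ψ := LaurentSeries.expand ℂ hj with hψ
  obtain ⟨z, hz⟩ := IsAlgClosed.exists_pow_nat_eq c⁻¹ hj
  obtain ⟨w, hw⟩ := IsAlgClosed.exists_pow_nat_eq (-c⁻¹) hj
  let ℓ := Fin.append (fun i => C (HahnSeries.single k z) * map ψ (x i))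
    (fun i => C (HahnSeries.single k w) * map ψ (y i))
  have hℓ : ∑ i, ℓ i ^ j =
      C (HahnSeries.C c⁻¹) * map ψ (C (HahnSeries.single k 1) * (∑ i, x i ^ j - ∑ i, y i ^ j)) := by
    simp only [ℓ, Fin.sum_univ_add, Fin.append_left, Fin.append_right, mul_pow, ← map_pow,
      HahnSeries.single_pow, hz, hw, map_mul, map_sub, map_sum, map_C]
    rw [hψ, LaurentSeries.expand_single, ← Finset.mul_sum, ← Finset.mul_sum, HahnSeries.single_neg,
      map_neg, ← mul_assoc, ← map_mul, HahnSeries.C_apply, HahnSeries.single_mul_single, zero_add,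
      mul_one, nsmul_eq_mul]
    ring
  refine ⟨ℓ, Fin.addCases (fun i => by simpa only [ℓ, Fin.append_left] using ((hx i).map ψ).C_mul _)
    (fun i => by simpa only [ℓ, Fin.append_right] using ((hy i).map ψ).C_mul _), ?_⟩
  rw [hℓ]
  simpa [← mul_assoc, ← map_mul, inv_mul_cancel₀ hc] using
    (approxTo_C_C c⁻¹).mul (h.map_expand hj)

theorem sum_homogeneousComponent_of_totalDegree_le {σ R : Type*} [CommSemiring R]
    {g : MvPolynomial σ R} {d : ℕ} (hdeg : g.totalDegree ≤ d) :
    ∑ k ∈ Finset.range (d + 1), homogeneousComponent k g = g := by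
  rw [← Finset.sum_subset (Finset.range_subset_range.2 (by omega : g.totalDegree + 1 ≤ d + 1))
    fun k _ hk => homogeneousComponent_eq_zero k g (by simpa using hk),
    sum_homogeneousComponent]

theorem memBorderSLS_of_homogeneousComponent {N r d : ℕ} {g : MvPolynomial (Fin N) ℂ}
    (hdeg : g.totalDegree ≤ d) (h0 : homogeneousComponent 0 g = 0)
    (h : ∀ j, 0 < j → ∃ ℓ : Fin r → MvPolynomial (Fin N) ℂ⸨X⸩,
      (∀ i, (ℓ i).IsHomogeneous 1) ∧ ApproxTo (∑ i, ℓ i ^ j) (homogeneousComponent j g)) :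
    MemBorderSLS g (r * d) d := by
  choose ℓ hℓ hℓg using fun q : Fin d => h (q + 1) q.succ_pos
  refine ⟨fun i => ℓ (finProdFinEquiv.symm i).2 (finProdFinEquiv.symm i).1,
    fun i => (finProdFinEquiv.symm i).2 + 1, fun i => (hℓ _ _).totalDegree_le,
    fun i => (finProdFinEquiv.symm i).2.isLt, ?_⟩
  have hg : g = ∑ q : Fin d, homogeneousComponent (q + 1) g := by
    conv_lhs => rw [← sum_homogeneousComponent_of_totalDegree_le hdeg]
    rw [Finset.sum_range_succ', h0, add_zero, Fin.sum_univ_eq_sum_range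
      (fun k => homogeneousComponent (k + 1) g)]
  rw [Equiv.sum_comp finProdFinEquiv.symm fun p => ℓ p.2 p.1 ^ (p.2.val + 1),
    Fintype.sum_prod_type_right, hg]
  exact ApproxTo.sum fun q _ => hℓg q

theorem statement16_general {n d m : ℕ} (f : MvPolynomial (Fin n) ℂ) (hdeg : f.totalDegree = d)
    (M : ℕ)
    (a b : Fin m → MvPolynomial (Fin n) (LaurentSeries ℂ))
    (hahom : ∀ i, (a i).IsHomogeneous 1) (hbhom : ∀ i, (b i).IsHomogeneous 1)
    (hareg : ∀ i, HasRegularCoeffs (a i)) (hbreg : ∀ i, HasRegularCoeffs (b i))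
    (happrox : ApproxTo
      (C (HahnSeries.single (-(M : ℤ)) (1 : ℂ)) *
        ((∏ i, (1 + C (HahnSeries.single (1 : ℤ) (1 : ℂ)) * a i)) -
          ∏ i, (1 + C (HahnSeries.single (1 : ℤ) (1 : ℂ)) * b i))) f) :
    MemBorderSLS f (2 * m * d) d ∧
      (∀ j : ℕ, 1 ≤ j → j ≤ d →
        borderWaringRank (homogeneousComponent j f) j ≤ 2 * m) ∧
      homogeneousComponent 0 f = 0 := by
  have hεmul (c : Fin m → MvPolynomial (Fin n) ℂ⸨X⸩) (hc : ∀ i, HasRegularCoeffs (c i))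
      (i : Fin m) : ApproxTo (C (HahnSeries.single 1 1) * c i) 0 := by
    obtain ⟨_, h⟩ := (hc i).exists_approxTo
    simpa using approxTo_C_single_one.mul h
  have hE (k : ℕ) := happrox.homogeneousComponent k
  simp only [homogeneousComponent_C_mul, map_sub, homogeneousComponent_prod_one_add
    fun i => (hahom i).C_mul _, homogeneousComponent_prod_one_add fun i => (hbhom i).C_mul _] at hE
  have h0 : homogeneousComponent 0 f = 0 :=
    (hE 0).unique (by simpa [esymmOf_zero] using approxTo_zero)
  have key (j : ℕ) (hj : 0 < j) := exists_sum_pow_approxTo hj (-M) (fun i => (hahom i).C_mul _)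
    (fun i => (hbhom i).C_mul _) (c := (-1) ^ (j + 1) * j)
    (mul_ne_zero (pow_ne_zero _ (neg_ne_zero.2 one_ne_zero)) (Nat.cast_ne_zero.2 hj.ne'))
    (by simpa using approxTo_mul_sum_pow_sub _ (hεmul a hareg) (hεmul b hbreg) hE hj)
  rw [two_mul]
  exact ⟨memBorderSLS_of_homogeneousComponent hdeg.le h0 key,
    fun j hj _ => Nat.sInf_le (key j hj), h0⟩

/-- If `f` of degree `d` satisfies
`f ≡ ε^{-M} (∏ (1 + ε aᵢ) - ∏ (1 + ε bᵢ)) (mod ε)` with `M ≥ 1` and homogeneous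
linear forms `aᵢ, bᵢ` with coefficients in `ℂ[[ε]]`, then `f ∈ Σ^[2md]Λ^[d]Σ`
(border), each homogeneous component of degree `j` with `1 ≤ j ≤ d` has border
Waring rank at most `2m`, and the degree-0 component of `f` is `0`. -/
theorem statement16 {n d m : ℕ} (f : MvPolynomial (Fin n) ℂ) (hdeg : f.totalDegree = d)
    (M : ℕ) (hM : 1 ≤ M)
    (a b : Fin m → MvPolynomial (Fin n) (LaurentSeries ℂ))
    (hahom : ∀ i, (a i).IsHomogeneous 1) (hbhom : ∀ i, (b i).IsHomogeneous 1)
    (hareg : ∀ i, HasRegularCoeffs (a i)) (hbreg : ∀ i, HasRegularCoeffs (b i))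
    (happrox : ApproxTo
      (C (HahnSeries.single (-(M : ℤ)) (1 : ℂ)) *
        ((∏ i, (1 + C (HahnSeries.single (1 : ℤ) (1 : ℂ)) * a i)) -
          ∏ i, (1 + C (HahnSeries.single (1 : ℤ) (1 : ℂ)) * b i))) f) :
    MemBorderSLS f (2 * m * d) d ∧
      (∀ j : ℕ, 1 ≤ j → j ≤ d →
        borderWaringRank (homogeneousComponent j f) j ≤ 2 * m) ∧
      homogeneousComponent 0 f = 0 :=
  statement16_general f hdeg M a b hahom hbhom hareg hbreg happrox
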